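/- For all u, v > 0, θ(1,u) + θ(1,v) ≤ θ(u+1, v+1), where θ is the logarithmic mean. -/

import Mathlib

/-- The logarithmic mean, extended by `θ(s,s) = s` and `θ(s,0) = θ(0,t) = 0`. -/
noncomputable def logMean (s t : ℝ) : ℝ :=
  if s = t then s else if s = 0 ∨ t = 0 then 0 else (s - t) / (Real.log s - Real.log t)

/-- Partial derivative of the logarithmic mean in the first variable. -/
noncomputable def logMean₁ (s t : ℝ) : ℝ := deriv (fun x => logMean x t) s

/-- Partial derivative of the logarithmic mean in the second variable. -/
noncomputable def logMean₂ (s t : ℝ) : ℝ := deriv (fun y => logMean s y) t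

/-!
The logarithmic mean is the integral of weighted geometric means,
`θ(s, t) = ∫₀¹ s ^ x * t ^ (1 - x) dx`, and for each fixed weight the weighted geometric mean
`(s, t) ↦ s ^ x * t ^ (1 - x)` is superadditive (weighted AM-GM applied to `(a, b)` and `(c, d)`
after normalizing by `(a + c, b + d)`). Applying this to `(u, 1) + (1, v) = (u + 1, v + 1)` and
integrating over `x` gives the inequality.
-/

open Real intervalIntegral

lemma logMean_comm (s t : ℝ) : logMean s t = logMean t s := by
  unfold logMean
  rcases eq_or_ne s t with rfl | hst
  · rfl
  · simp_rw [if_neg hst, if_neg hst.symm, or_comm (a := s = 0), ← neg_div_neg_eq (s - t), neg_sub]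

lemma intervalIntegrable_rpow_mul_rpow {s t : ℝ} (hs : 0 < s) (ht : 0 < t) (a b : ℝ) :
    IntervalIntegrable (fun x : ℝ => s ^ x * t ^ (1 - x)) MeasureTheory.volume a b := by
  apply Continuous.intervalIntegrable
  fun_prop (disch := positivity)

lemma hasDerivAt_rpow_mul_rpow {s t : ℝ} (hs : 0 < s) (ht : 0 < t) (x : ℝ) :
    HasDerivAt (fun y => s ^ y * t ^ (1 - y)) (s ^ x * t ^ (1 - x) * (log s - log t)) x := by
  refine (((hasDerivAt_id x).const_rpow hs).fun_mul
    (((hasDerivAt_id x).const_sub 1).const_rpow ht)).congr_deriv ?_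
  simp only [id_eq]
  ring

lemma logMean_eq_integral {s t : ℝ} (hs : 0 < s) (ht : 0 < t) :
    logMean s t = ∫ x in (0 : ℝ)..1, s ^ x * t ^ (1 - x) := by
  rcases eq_or_ne s t with rfl | hst
  · simp_rw [← rpow_add hs, add_sub_cancel, rpow_one]
    simp [logMean]
  · have hlog : log s - log t ≠ 0 :=
      sub_ne_zero.mpr fun h => hst (log_injOn_pos hs ht h)
    have hderiv (x : ℝ) (_ : x ∈ Set.uIcc (0 : ℝ) 1) :
        HasDerivAt (fun y => s ^ y * t ^ (1 - y) / (log s - log t)) (s ^ x * t ^ (1 - x)) x := by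
      simpa only [mul_div_cancel_right₀ _ hlog] using
        (hasDerivAt_rpow_mul_rpow hs ht x).div_const (log s - log t)
    rw [integral_eq_sub_of_hasDerivAt hderiv (intervalIntegrable_rpow_mul_rpow hs ht 0 1)]
    simp [logMean, hst, hs.ne', ht.ne', sub_div]

lemma rpow_mul_rpow_add_rpow_mul_rpow_le {a b c d x : ℝ} (ha : 0 < a) (hb : 0 < b) (hc : 0 < c)
    (hd : 0 < d) (hx₀ : 0 ≤ x) (hx₁ : x ≤ 1) :
    a ^ x * b ^ (1 - x) + c ^ x * d ^ (1 - x) ≤ (a + c) ^ x * (b + d) ^ (1 - x) := by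
  have hac : 0 < a + c := by positivity
  have hbd : 0 < b + d := by positivity
  have amgm {p q : ℝ} (hp : 0 < p) (hq : 0 < q) :
      p ^ x * q ^ (1 - x) / ((a + c) ^ x * (b + d) ^ (1 - x))
        ≤ x * (p / (a + c)) + (1 - x) * (q / (b + d)) := by
    rw [mul_div_mul_comm, ← div_rpow hp.le hac.le, ← div_rpow hq.le hbd.le]
    exact geom_mean_le_arith_mean2_weighted hx₀ (sub_nonneg.2 hx₁) (by positivity)
      (by positivity) (add_sub_cancel x 1)
  have hweights : x * (a / (a + c)) + (1 - x) * (b / (b + d))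
      + (x * (c / (a + c)) + (1 - x) * (d / (b + d))) = 1 := by
    field_simp
    ring
  have hsum := add_le_add (amgm ha hb) (amgm hc hd)
  rwa [hweights, ← add_div, div_le_one (by positivity)] at hsum

theorem logMean_one_add (u v : ℝ) (hu : 0 < u) (hv : 0 < v) :
    logMean 1 u + logMean 1 v ≤ logMean (u + 1) (v + 1) := by
  have hu1 : 0 < u + 1 := by positivity
  have hv1 : 0 < v + 1 := by positivity
  have hint₁ := intervalIntegrable_rpow_mul_rpow hu one_pos 0 1
  have hint₂ := intervalIntegrable_rpow_mul_rpow one_pos hv 0 1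
  rw [logMean_comm 1 u, logMean_eq_integral hu one_pos, logMean_eq_integral one_pos hv,
    logMean_eq_integral hu1 hv1, ← integral_add hint₁ hint₂]
  refine integral_mono_on zero_le_one (hint₁.add hint₂)
    (intervalIntegrable_rpow_mul_rpow hu1 hv1 0 1) fun x hx => ?_
  simpa only [add_comm 1 v] using
    rpow_mul_rpow_add_rpow_mul_rpow_le hu one_pos one_pos hv hx.1 hx.2
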